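/- Let y = f*(x) + εs and y' = y + εa with εa ≤ 0 a.s. and, a.s. on {εa < 0}, 2|εs| < |εa|. Let f be a function satisfying |f(x) − f*(x)| ≤ |εs| almost surely. Then on the event {f(x) ≤ y'}, we have εa = 0 almost surely. -/
import Mathlib

open MeasureTheory ProbabilityTheory

theorem stmt_1 {D : ℕ} {Ω : Type*} [MeasureSpace Ω]
    [IsProbabilityMeasure (ℙ : Measure Ω)]
    (x : Ω → (Fin D → ℝ)) (εs εa : Ω → ℝ) (fstar f : (Fin D → ℝ) → ℝ)
    (hfstar : Measurable fstar) (hfm : Measurable f)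
    (y y' : Ω → ℝ) (hy : y = fun ω => fstar (x ω) + εs ω)
    (hy' : y' = fun ω => y ω + εa ω)
    (ha : ∀ᵐ ω ∂ℙ, εa ω ≤ 0)
    (hnoise : ∀ᵐ ω ∂ℙ, εa ω < 0 → 2 * |εs ω| < |εa ω|)
    (hf : ∀ᵐ ω ∂ℙ, |f (x ω) - fstar (x ω)| ≤ |εs ω|) :
    ∀ᵐ ω ∂ℙ, f (x ω) ≤ y' ω → εa ω = 0 := by
  subst hy hy'
  filter_upwards [ha, hnoise, hf] with ω h1 h2 h3 h4
  by_contra hne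
  have hlt : εa ω < 0 := lt_of_le_of_ne h1 hne
  have h5 := h2 hlt
  rw [abs_of_neg hlt] at h5
  rcases abs_cases (f (x ω) - fstar (x ω)) with ⟨he, _⟩ | ⟨he, _⟩ <;>
    rcases abs_cases (εs ω) with ⟨he2, _⟩ | ⟨he2, _⟩ <;>
    simp only [he2] at h3 h5 <;> linarith [he ▸ h3]
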